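/- Let ε ∈ (0,1], t ∈ [0,ε], ρ(y) = exp(y²/(8(1+t/ε))), ⟨ξ⟩ = (1+ξ²)^{1/2} and θ_ξ(y) = 1 − exp(−y²⟨ξ⟩²/(2(1+t/ε))). There is a universal constant C (independent of ξ, t, ε) such that ‖y ρ² (1−θ_ξ)‖_{L²_y(0,∞)} ≤ C ⟨ξ⟩^{−3/2} for every ξ ∈ ℝ. -/
import Mathlib


open MeasureTheory Set Filter

noncomputable section

/-- Gaussian weight `ρ(y) = exp(y²/(8(1+t/ε)))`. -/
def rho (ε t y : ℝ) : ℝ := Real.exp (y ^ 2 / (8 * (1 + t / ε)))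

/-- Japanese bracket `⟨ξ⟩ = √(1+ξ²)`. -/
def brak (ξ : ℝ) : ℝ := Real.sqrt (1 + ξ ^ 2)

/-- Lift function `θ_ξ(y) = 1 − exp(−y²⟨ξ⟩²/(2(1+t/ε)))`. -/
def theta (ε t ξ y : ℝ) : ℝ :=
  1 - Real.exp (-(y ^ 2 * (1 + ξ ^ 2)) / (2 * (1 + t / ε)))

/-- **Bound (4.22) of the paper**: `‖y ρ² (1−θ_ξ)‖_{L²_y(0,∞)} ≤ C ⟨ξ⟩^{−3/2}` with a
universal constant `C` independent of `ξ`, `t`, `ε`. -/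
theorem y_rho_sq_one_minus_theta_L2_bound :
    ∃ C : ℝ, 0 < C ∧ ∀ ε t ξ : ℝ, 0 < ε → ε ≤ 1 → 0 ≤ t → t ≤ ε →
      Real.sqrt (∫ y in Ioi (0 : ℝ), (y * (rho ε t y) ^ 2 * (1 - theta ε t ξ y)) ^ 2)
        ≤ C * brak ξ ^ (-(3 : ℝ) / 2) := by
  refine ⟨3, by norm_num, fun ε t ξ hε hε1 ht htε => ?_⟩
  set a : ℝ := 1 + t / ε with ha
  have ha1 : 1 ≤ a := by
    have : 0 ≤ t / ε := div_nonneg ht hε.le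
    simp [ha]; linarith
  have ha2 : a ≤ 2 := by
    have : t / ε ≤ 1 := (div_le_one hε).mpr htε
    simp [ha]; linarith
  have ha0 : 0 < a := by linarith
  clear_value a
  set c : ℝ := 1 + ξ ^ 2 with hc
  have hc1 : 1 ≤ c := by nlinarith [sq_nonneg ξ]
  have hc0 : 0 < c := by linarith
  set s : ℝ := Real.sqrt c with hs
  have hs1 : 1 ≤ s := by
    rw [hs, show (1:ℝ) = Real.sqrt 1 from (Real.sqrt_one).symm]
    exact Real.sqrt_le_sqrt hc1
  have hs0 : 0 < s := by linarith
  have hssq : s ^ 2 = c := by rw [hs]; exact Real.sq_sqrt hc0.le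
  have hbrak : brak ξ = s := by rw [hs, hc]; rfl
  clear_value s
  clear_value c
  have he : (0:ℝ) < Real.exp 1 := Real.exp_pos 1
  -- the dominating function
  set K : ℝ := 8 / (c * Real.exp 1) with hK
  have hK0 : 0 < K := by positivity
  clear_value K
  -- pointwise bound
  have hane : a ≠ 0 := ne_of_gt ha0
  have hcne : c ≠ 0 := ne_of_gt hc0
  have hpt : ∀ y : ℝ, (y * (rho ε t y) ^ 2 * (1 - theta ε t ξ y)) ^ 2
      ≤ K * Real.exp (-(c / 8) * y ^ 2) := by
    intro y
    have key : ∀ A B : ℝ, (y * Real.exp A ^ 2 * Real.exp B) ^ 2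
        = y ^ 2 * Real.exp (4 * A + 2 * B) := by
      intro A B
      have h2 : ∀ x : ℝ, Real.exp x ^ 2 = Real.exp (2 * x) := fun x => by
        rw [two_mul, Real.exp_add, sq]
      rw [mul_pow, mul_pow, h2, h2, h2, mul_assoc, ← Real.exp_add]
      congr 1
      congr 1
      ring
    have hform : (y * (rho ε t y) ^ 2 * (1 - theta ε t ξ y)) ^ 2
        = y ^ 2 * Real.exp (y ^ 2 / (2 * a) - y ^ 2 * c / a) := by
      simp only [rho, theta, sub_sub_cancel, ← ha, ← hc]
      rw [key]
      congr 1
      rw [Real.exp_eq_exp]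
      field_simp
      ring
    rw [hform]
    have hE : y ^ 2 / (2 * a) - y ^ 2 * c / a ≤ -(c / 4) * y ^ 2 := by
      have hca : c * a ≤ 2 * c := by nlinarith [mul_nonneg (by linarith : (0:ℝ) ≤ 2 - a) hc0.le]
      rw [div_sub_div _ _ (by positivity : (2:ℝ) * a ≠ 0) hane,
        div_le_iff₀ (by positivity : (0:ℝ) < 2 * a * a)]
      nlinarith [mul_nonneg (mul_nonneg (sq_nonneg y) ha0.le)
        (by nlinarith : (0:ℝ) ≤ 2 * c - 1 - c * a / 2)]
    have h1 : y ^ 2 * Real.exp (y ^ 2 / (2 * a) - y ^ 2 * c / a)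
        ≤ y ^ 2 * Real.exp (-(c / 4) * y ^ 2) :=
      mul_le_mul_of_nonneg_left (Real.exp_le_exp.mpr hE) (sq_nonneg y)
    refine h1.trans ?_
    have hu : y ^ 2 * Real.exp (-(c / 8) * y ^ 2) ≤ K := by
      have key2 : c / 8 * y ^ 2 ≤ Real.exp (c / 8 * y ^ 2) / Real.exp 1 := by
        have := Real.add_one_le_exp (c / 8 * y ^ 2 - 1)
        rw [Real.exp_sub] at this
        linarith
      have hy2 : y ^ 2 ≤ 8 / c * (Real.exp (c / 8 * y ^ 2) / Real.exp 1) := by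
        calc y ^ 2 = 8 / c * (c / 8 * y ^ 2) := by field_simp
          _ ≤ 8 / c * (Real.exp (c / 8 * y ^ 2) / Real.exp 1) :=
              mul_le_mul_of_nonneg_left key2 (by positivity)
      calc y ^ 2 * Real.exp (-(c / 8) * y ^ 2)
          ≤ 8 / c * (Real.exp (c / 8 * y ^ 2) / Real.exp 1) * Real.exp (-(c / 8) * y ^ 2) :=
            mul_le_mul_of_nonneg_right hy2 (Real.exp_pos _).le
        _ = K := by
            rw [hK, show (-(c / 8) * y ^ 2) = -(c / 8 * y ^ 2) by ring, Real.exp_neg]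
            field_simp
    calc y ^ 2 * Real.exp (-(c / 4) * y ^ 2)
        = (y ^ 2 * Real.exp (-(c / 8) * y ^ 2)) * Real.exp (-(c / 8) * y ^ 2) := by
          rw [mul_assoc, ← Real.exp_add]; ring_nf
      _ ≤ K * Real.exp (-(c / 8) * y ^ 2) :=
          mul_le_mul_of_nonneg_right hu (Real.exp_pos _).le
  -- integrability of the dominating function
  have hgi : Integrable (fun y : ℝ => K * Real.exp (-(c / 8) * y ^ 2))
      (volume.restrict (Ioi (0:ℝ))) :=
    ((integrable_exp_neg_mul_sq (by positivity : (0:ℝ) < c / 8)).const_mul K).restrict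
  have hmono : (∫ y in Ioi (0:ℝ), (y * (rho ε t y) ^ 2 * (1 - theta ε t ξ y)) ^ 2)
      ≤ ∫ y in Ioi (0:ℝ), K * Real.exp (-(c / 8) * y ^ 2) := by
    refine integral_mono_of_nonneg ?_ hgi ?_
    · exact Filter.Eventually.of_forall fun y => sq_nonneg _
    · exact Filter.Eventually.of_forall fun y => hpt y
  have hgauss : (∫ y in Ioi (0:ℝ), K * Real.exp (-(c / 8) * y ^ 2))
      = K * (Real.sqrt (Real.pi / (c / 8)) / 2) := by
    rw [integral_const_mul, integral_gaussian_Ioi]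
  -- numeric facts
  have hsqrt8pi : Real.sqrt (8 * Real.pi) ≤ 6 := by
    nlinarith [Real.sq_sqrt (by positivity : (0:ℝ) ≤ 8 * Real.pi),
      Real.sqrt_nonneg (8 * Real.pi), Real.pi_le_four,
      sq_nonneg (Real.sqrt (8 * Real.pi) - 6)]
  have hcs : c * s = s ^ 3 := by rw [← hssq]; ring
  have hsx : Real.sqrt (Real.pi / (c / 8)) = Real.sqrt (8 * Real.pi) / s := by
    rw [show Real.pi / (c / 8) = (8 * Real.pi) / c by ring,
      Real.sqrt_div (by positivity) c, hs]
  have hs3 : (0:ℝ) < s ^ 3 := by positivity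
  have hval : K * (Real.sqrt (8 * Real.pi) / s / 2) ≤ 9 / s ^ 3 := by
    have heq : K * (Real.sqrt (8 * Real.pi) / s / 2)
        = (4 * Real.sqrt (8 * Real.pi) / Real.exp 1) / s ^ 3 := by
      rw [hK, ← hcs]; field_simp; ring
    rw [heq]
    have hnum : 4 * Real.sqrt (8 * Real.pi) / Real.exp 1 ≤ 9 := by
      rw [div_le_iff₀ he]
      have := Real.exp_one_gt_d9
      linarith
    exact (div_le_div_iff_of_pos_right hs3).mpr hnum
  have h1 : (∫ y in Ioi (0:ℝ), (y * (rho ε t y) ^ 2 * (1 - theta ε t ξ y)) ^ 2)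
      ≤ 9 / s ^ 3 := by
    rw [hgauss, hsx] at hmono
    exact hmono.trans hval
  have hrpow : s ^ (-(3:ℝ)/2) = (Real.sqrt (s ^ 3))⁻¹ := by
    rw [show (-(3:ℝ)/2) = -((3:ℝ)/2) by ring, Real.rpow_neg hs0.le,
      show ((3:ℝ)/2) = (3:ℕ) * (1/2 : ℝ) by norm_num,
      Real.rpow_mul hs0.le, Real.rpow_natCast, ← Real.sqrt_eq_rpow]
  calc Real.sqrt (∫ y in Ioi (0:ℝ), (y * (rho ε t y) ^ 2 * (1 - theta ε t ξ y)) ^ 2)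
      ≤ Real.sqrt (9 / s ^ 3) := Real.sqrt_le_sqrt h1
    _ = 3 / Real.sqrt (s ^ 3) := by
        rw [Real.sqrt_div (by norm_num : (0:ℝ) ≤ 9),
          show (9:ℝ) = 3 ^ 2 by norm_num, Real.sqrt_sq (by norm_num : (0:ℝ) ≤ 3)]
    _ = 3 * brak ξ ^ (-(3:ℝ)/2) := by rw [hbrak, hrpow]; ring
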